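/- Let δ₁, …, δ_M, δ_{M+1} be i.i.d. real-valued random variables with a continuous (atomless) distribution, let α ∈ (0,1), and let n = ⌈(M+1)(1−α)⌉ with n ≤ M. If c is the n-th order statistic of δ₁, …, δ_M, then P(δ_{M+1} ≤ c) ≤ 1 − α + 1/(M+1). -/

import Mathlib

open MeasureTheory ProbabilityTheory
open scoped ENNReal

section Aux

/-- For a sorted list, `a ≤ l[k]` iff at most `k` entries are `< a`. -/
lemma sorted_getD_le_iff (l : List ℝ) (hl : l.Pairwise (· ≤ ·)) (k : ℕ) (hk : k < l.length)
    (a : ℝ) : a ≤ l.getD k 0 ↔ l.countP (fun b => decide (b < a)) ≤ k := by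
  have hget : l.getD k 0 = l[k] := List.getD_eq_getElem l 0 hk
  have hpw := List.pairwise_iff_getElem.1 hl
  rw [hget]
  constructor
  · intro h
    have hsplit : l.countP (fun b => decide (b < a))
        = (l.take k).countP (fun b => decide (b < a))
          + (l.drop k).countP (fun b => decide (b < a)) := by
      rw [← List.countP_append, List.take_append_drop]
    have hdrop : (l.drop k).countP (fun b => decide (b < a)) = 0 := by
      rw [List.countP_eq_zero]
      intro b hb
      simp only [decide_eq_true_eq, not_lt]
      obtain ⟨i, hi, rfl⟩ := List.mem_iff_getElem.1 hb
      rw [List.getElem_drop]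
      refine le_trans h ?_
      rcases Nat.eq_zero_or_pos i with rfl | hip
      · simp
      · exact hpw k (k + i) (by omega) (by simp [List.length_drop] at hi; omega) (by omega)
    have htake : (l.take k).countP (fun b => decide (b < a)) ≤ k :=
      le_trans (List.countP_le_length (p := _)) (by rw [List.length_take]; omega)
    omega
  · intro h
    by_contra hlt
    push_neg at hlt
    have hlen : (l.take (k + 1)).length = k + 1 := by
      rw [List.length_take]; omega
    have htake : (l.take (k + 1)).countP (fun b => decide (b < a))
        = (l.take (k + 1)).length := by
      rw [List.countP_eq_length]
      intro b hb
      simp only [decide_eq_true_eq]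
      obtain ⟨i, hi, rfl⟩ := List.mem_iff_getElem.1 hb
      rw [List.getElem_take]
      rcases eq_or_lt_of_le (show i ≤ k by omega) with rfl | hik
      · exact hlt
      · exact lt_of_le_of_lt (hpw i k (by omega) hk hik) hlt
    have hsplit : l.countP (fun b => decide (b < a))
        = (l.take (k+1)).countP (fun b => decide (b < a))
          + (l.drop (k+1)).countP (fun b => decide (b < a)) := by
      rw [← List.countP_append, List.take_append_drop]
    omega


/-- For distinct values, exactly `n` indices have rank `< n`. -/
lemma rank_count {N : ℕ} (x : Fin N → ℝ) (hx : Function.Injective x) (n : ℕ) (hn : n ≤ N) :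
    (Finset.univ.filter fun j => (Finset.univ.filter fun i => x i < x j).card < n).card = n := by
  classical
  set r : Fin N → ℕ := fun j => (Finset.univ.filter fun i => x i < x j).card with hr
  have hmono : ∀ i j : Fin N, x i < x j → r i < r j := by
    intro i j hij
    refine Finset.card_lt_card ?_
    constructor
    · intro k hk
      simp only [Finset.mem_filter, Finset.mem_univ, true_and] at hk ⊢
      exact hk.trans hij
    · intro hsub
      have : i ∈ Finset.univ.filter fun k => x k < x j := by
        simp [hij]
      have := hsub this
      simp at this
  have hrinj : Function.Injective r := by
    intro i j hij
    by_contra hne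
    rcases lt_trichotomy (x i) (x j) with h | h | h
    · exact absurd hij (Nat.ne_of_lt (hmono _ _ h))
    · exact hne (hx h)
    · exact absurd hij.symm (Nat.ne_of_lt (hmono _ _ h))
  have hlt : ∀ j, r j < N := by
    intro j
    have : (Finset.univ.filter fun i => x i < x j) ⊂ Finset.univ := by
      refine (Finset.ssubset_iff_of_subset (Finset.subset_univ _)).2 ⟨j, Finset.mem_univ _, ?_⟩
      simp
    simpa [Finset.card_univ] using Finset.card_lt_card this
  have himg : Finset.univ.image r = Finset.range N := by
    refine Finset.eq_of_subset_of_card_le ?_ ?_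
    · intro k hk
      obtain ⟨j, _, rfl⟩ := Finset.mem_image.1 hk
      exact Finset.mem_range.2 (hlt j)
    · rw [Finset.card_range, Finset.card_image_of_injective _ hrinj]
      simp
  calc (Finset.univ.filter fun j => r j < n).card
      = ((Finset.univ.filter fun j => r j < n).image r).card :=
        (Finset.card_image_of_injective _ hrinj).symm
    _ = ((Finset.univ.image r).filter fun k => k < n).card := by
        rw [Finset.filter_image]
    _ = n := by
        rw [himg]
        have : (Finset.range N).filter (fun k => k < n) = Finset.range n := by
          ext k
          simp only [Finset.mem_filter, Finset.mem_range]
          omega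
        rw [this, Finset.card_range]


lemma countP_ofFn {m : ℕ} (g : Fin m → ℝ) (a : ℝ) :
    (List.ofFn g).countP (fun b => decide (b < a))
      = (Finset.univ.filter fun i => g i < a).card := by
  classical
  rw [List.ofFn_eq_map, List.countP_map]
  rw [Fin.univ_def]
  simp only [Finset.filter, Finset.card, Multiset.filter_coe, Multiset.coe_card]
  rw [List.countP_eq_length_filter]
  rfl

end Aux

/-- Upper coverage bound for conformal prediction: for i.i.d. scores with an
atomless common distribution, the coverage of the `n`-th order statistic
(`n = ⌈(M+1)(1−α)⌉`) is at most `1 − α + 1/(M+1)`. -/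
theorem conformal_coverage_upper
    {Ω : Type*} [MeasurableSpace Ω] (μ : Measure Ω) [IsProbabilityMeasure μ]
    (M : ℕ) (δ : Fin (M + 1) → Ω → ℝ) (hmeas : ∀ i, Measurable (δ i))
    (hindep : iIndepFun δ μ)
    (ν : Measure ℝ) [IsProbabilityMeasure ν] [NullSingletonClass ν]
    (hident : ∀ i, Measure.map (δ i) μ = ν)
    (α : ℝ) (hα : α ∈ Set.Ioo (0 : ℝ) 1)
    (n : ℕ) (hn : n = ⌈((M : ℝ) + 1) * (1 - α)⌉₊) (hnM : n ≤ M)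
    (c : Ω → ℝ)
    (hc : ∀ ω, c ω =
      (((Multiset.ofList (List.ofFn fun i : Fin M => δ i.castSucc ω)).sort (· ≤ ·)).getD
        (n - 1) 0)) :
    μ {ω | δ (Fin.last M) ω ≤ c ω}
      ≤ ENNReal.ofReal (1 - α + 1 / ((M : ℝ) + 1)) := by
  classical
  obtain ⟨hα0, hα1⟩ := hα
  have hy : (0:ℝ) < ((M:ℝ)+1) * (1 - α) := by
    apply mul_pos
    · positivity
    · linarith
  have hn1 : 1 ≤ n := by
    rw [hn]; exact Nat.ceil_pos.2 hy
  -- the product measure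
  set P : Measure (Fin (M+1) → ℝ) := Measure.pi (fun _ => ν) with hP
  set T : Ω → (Fin (M+1) → ℝ) := fun ω i => δ i ω with hT
  have hTmeas : Measurable T := measurable_pi_lambda _ hmeas
  have hmap : Measure.map T μ = P := by
    refine (Measure.pi_eq fun s hs => ?_).symm
    rw [Measure.map_apply hTmeas (MeasurableSet.univ_pi hs)]
    have hpre : T ⁻¹' (Set.univ.pi s) = ⋂ i ∈ Finset.univ, δ i ⁻¹' (s i) := by
      ext ω; simp [hT, Set.mem_pi]
    rw [hpre, hindep.measure_inter_preimage_eq_mul Finset.univ (fun i _ => hs i)]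
    exact Finset.prod_congr rfl fun i _ => by
      rw [← Measure.map_apply (hmeas i) (hs i), hident i]
  -- counting function and events
  set cnt : Fin (M+1) → (Fin (M+1) → ℝ) → ℕ :=
    fun j x => (Finset.univ.filter fun i => x i < x j).card with hcnt
  set B : Fin (M+1) → Set (Fin (M+1) → ℝ) := fun j => {x | cnt j x < n} with hB
  have hBmeas : ∀ j, MeasurableSet (B j) := by
    intro j
    have hfr : ∀ x : Fin (M+1) → ℝ,
        ((cnt j x : ℕ) : ℝ) = ∑ i : Fin (M+1), if x i < x j then (1:ℝ) else 0 := by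
      intro x
      simp only [hcnt]
      rw [Finset.card_filter]
      push_cast [apply_ite (Nat.cast : ℕ → ℝ)]
      rfl
    have hmeasf : Measurable fun x : Fin (M+1) → ℝ =>
        ∑ i : Fin (M+1), if x i < x j then (1:ℝ) else 0 :=
      Finset.measurable_sum _ fun i _ =>
        Measurable.ite (measurableSet_lt (measurable_pi_apply i) (measurable_pi_apply j))
          measurable_const measurable_const
    have hBeq : B j = (fun x : Fin (M+1) → ℝ =>
        ∑ i : Fin (M+1), if x i < x j then (1:ℝ) else 0) ⁻¹' Set.Iio (n : ℝ) := by
      ext x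
      simp only [hB, Set.mem_setOf_eq, Set.mem_preimage, Set.mem_Iio, ← hfr, Nat.cast_lt]
    rw [hBeq]
    exact hmeasf measurableSet_Iio
  -- the pointwise equivalence
  have hpoint : ∀ x : Fin (M+1) → ℝ,
      (x (Fin.last M) ≤
        ((Multiset.ofList (List.ofFn fun i : Fin M => x i.castSucc)).sort (· ≤ ·)).getD
          (n - 1) 0) ↔ x ∈ B (Fin.last M) := by
    intro x
    set L : List ℝ := List.ofFn fun i : Fin M => x i.castSucc with hL
    set l : List ℝ := (Multiset.ofList L).sort (· ≤ ·) with hl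
    have hsorted : l.Pairwise (· ≤ ·) := Multiset.pairwise_sort _ _
    have hlen : l.length = M := by
      simp [hl, hL, Multiset.length_sort]
    have hperm : l.Perm L := Multiset.coe_eq_coe.1 (Multiset.sort_eq _ _)
    have hk : n - 1 < l.length := by omega
    rw [sorted_getD_le_iff l hsorted (n-1) hk (x (Fin.last M))]
    rw [hperm.countP_eq]
    rw [hL, countP_ofFn]
    have hcard : (Finset.univ.filter fun i : Fin M => x i.castSucc < x (Fin.last M)).card
        = cnt (Fin.last M) x := by
      simp only [hcnt]
      rw [Finset.card_filter, Finset.card_filter, Fin.sum_univ_castSucc]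
      simp
    rw [hcard]
    simp only [hB, Set.mem_setOf_eq]
    omega
  -- permutation invariance
  have hpermMeas : ∀ j, P (B j) = P (B (Fin.last M)) := by
    intro j
    set e : Equiv.Perm (Fin (M+1)) := Equiv.swap j (Fin.last M) with he
    have hmp := measurePreserving_piCongrLeft (fun _ : Fin (M+1) => ν) e
    set φ := MeasurableEquiv.piCongrLeft (fun _ : Fin (M+1) => ℝ) e with hφdef
    have hφ : ∀ (x : Fin (M+1) → ℝ) (i : Fin (M+1)), φ x i = x (e.symm i) := by
      intro x i
      have h1 := Equiv.piCongrLeft_apply_apply (fun _ : Fin (M+1) => ℝ) e x (e.symm i)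
      rw [Equiv.apply_symm_apply] at h1
      rw [hφdef, MeasurableEquiv.coe_piCongrLeft]
      exact h1
    have hesymm : e.symm = e := by rw [he, Equiv.symm_swap]
    have hpre : φ ⁻¹' (B j) = B (Fin.last M) := by
      ext x
      simp only [Set.mem_preimage, hB, Set.mem_setOf_eq, hcnt]
      have h2 : (Finset.univ.filter fun i => φ x i < φ x j).card
          = (Finset.univ.filter fun i => x i < x (Fin.last M)).card := by
        have h3 : ∀ i, φ x i = x (e i) := fun i => by rw [hφ, hesymm]
        have h4 : x (e j) = x (Fin.last M) := by rw [he, Equiv.swap_apply_left]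
        simp only [h3, h4]
        refine Finset.card_bij' (fun a _ => e a) (fun a _ => e.symm a) ?_ ?_ ?_ ?_
        · intro a ha
          simp only [Finset.mem_filter, Finset.mem_univ, true_and] at ha ⊢
          exact ha
        · intro a ha
          simp only [Finset.mem_filter, Finset.mem_univ, true_and] at ha ⊢
          rw [Equiv.apply_symm_apply]
          exact ha
        · intro a _; exact e.symm_apply_apply a
        · intro a _; exact e.apply_symm_apply a
      rw [h2]
    calc P (B j) = (Measure.map φ P) (B j) := by rw [hmp.map_eq]
      _ = P (φ ⁻¹' B j) := by
          rw [Measure.map_apply φ.measurable (hBmeas j)]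
      _ = P (B (Fin.last M)) := by rw [hpre]
  -- almost everywhere injectivity
  have hae : ∀ᵐ x ∂P, Function.Injective x := by
    rw [ae_iff]
    have hsub : {x : Fin (M+1) → ℝ | ¬ Function.Injective x}
        ⊆ ⋃ (i : Fin (M+1)) (j : Fin (M+1)) (_ : i ≠ j), {x | x i = x j} := by
      intro x hx
      simp only [Set.mem_setOf_eq, Function.Injective] at hx
      push_neg at hx
      obtain ⟨i, j, hxy, hne⟩ := hx
      exact Set.mem_iUnion.2 ⟨i, Set.mem_iUnion.2 ⟨j, Set.mem_iUnion.2 ⟨hne, hxy⟩⟩⟩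
    refine measure_mono_null hsub ?_
    refine measure_iUnion_null fun i => measure_iUnion_null fun j =>
      measure_iUnion_null fun hij => ?_
    have hDm : MeasurableSet {x : Fin (M+1) → ℝ | x i = x j} :=
      measurableSet_eq_fun (measurable_pi_apply i) (measurable_pi_apply j)
    rw [← hmap, Measure.map_apply hTmeas hDm]
    have hind2 : IndepFun (δ i) (δ j) μ := hindep.indepFun hij
    have hmp2 : Measure.map (fun ω => (δ i ω, δ j ω)) μ = ν.prod ν := by
      rw [(indepFun_iff_map_prod_eq_prod_map_map (hmeas i).aemeasurable
        (hmeas j).aemeasurable).1 hind2, hident i, hident j]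
    have hdiag : MeasurableSet {p : ℝ × ℝ | p.1 = p.2} :=
      measurableSet_eq_fun measurable_fst measurable_snd
    have hTpre : T ⁻¹' {x : Fin (M+1) → ℝ | x i = x j}
        = (fun ω => (δ i ω, δ j ω)) ⁻¹' {p : ℝ × ℝ | p.1 = p.2} := rfl
    rw [hTpre, ← Measure.map_apply ((hmeas i).prodMk (hmeas j)) hdiag, hmp2,
      Measure.prod_apply hdiag]
    have hfib : ∀ a : ℝ, ν (Prod.mk a ⁻¹' {p : ℝ × ℝ | p.1 = p.2}) = 0 := by
      intro a
      have : (Prod.mk a ⁻¹' {p : ℝ × ℝ | p.1 = p.2}) = {a} := by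
        ext y; simp [eq_comm]
      rw [this]
      exact measure_singleton a
    simp [hfib]
  -- sum over the events
  have hsum : ∑ j : Fin (M+1), P (B j) = (n : ℝ≥0∞) := by
    have h1 : ∀ j : Fin (M+1),
        P (B j) = ∫⁻ x, (B j).indicator (fun _ => (1:ℝ≥0∞)) x ∂P := by
      intro j
      exact (lintegral_indicator_one (hBmeas j)).symm
    calc ∑ j : Fin (M+1), P (B j)
        = ∑ j : Fin (M+1), ∫⁻ x, (B j).indicator (fun _ => (1:ℝ≥0∞)) x ∂P :=
          Finset.sum_congr rfl fun j _ => h1 j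
      _ = ∫⁻ x, ∑ j : Fin (M+1), (B j).indicator (fun _ => (1:ℝ≥0∞)) x ∂P :=
          (lintegral_finset_sum _ fun j _ =>
            (measurable_const.indicator (hBmeas j))).symm
      _ = ∫⁻ _, (n : ℝ≥0∞) ∂P := by
          refine lintegral_congr_ae ?_
          filter_upwards [hae] with x hx
          have hx2 : ∀ j : Fin (M+1), (B j).indicator (fun _ => (1:ℝ≥0∞)) x
              = if cnt j x < n then (1:ℝ≥0∞) else 0 := by
            intro j
            by_cases hj : x ∈ B j
            · rw [Set.indicator_of_mem hj]
              simp only [hB, Set.mem_setOf_eq] at hj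
              rw [if_pos hj]
            · rw [Set.indicator_of_notMem hj]
              simp only [hB, Set.mem_setOf_eq] at hj
              rw [if_neg hj]
          rw [Finset.sum_congr rfl fun j _ => hx2 j]
          have hcount : (∑ j : Fin (M+1), if cnt j x < n then (1:ℕ) else 0) = n := by
            rw [← Finset.card_filter]
            simpa only [hcnt] using rank_count x hx n (by omega)
          have hcast : (∑ j : Fin (M+1), if cnt j x < n then (1:ℝ≥0∞) else 0)
              = ((∑ j : Fin (M+1), (if cnt j x < n then 1 else 0 : ℕ)) : ℝ≥0∞) := by
            push_cast [apply_ite (Nat.cast : ℕ → ℝ≥0∞)]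
            rfl
          rw [hcast, ← Nat.cast_sum, hcount]
      _ = (n : ℝ≥0∞) := by simp
  -- conclude the measure of B last
  have hsum2 : ((M : ℝ≥0∞) + 1) * P (B (Fin.last M)) = (n : ℝ≥0∞) := by
    have : ∑ j : Fin (M+1), P (B j) = ∑ _j : Fin (M+1), P (B (Fin.last M)) :=
      Finset.sum_congr rfl fun j _ => hpermMeas j
    rw [this, Finset.sum_const, Finset.card_univ, Fintype.card_fin] at hsum
    rw [← hsum]
    rw [nsmul_eq_mul]
    push_cast
    ring
  -- the real-number inequality
  have hreal : (n : ℝ) ≤ ((M:ℝ) + 1) * (1 - α + 1 / ((M:ℝ)+1)) := by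
    have hceil : (n : ℝ) < ((M:ℝ)+1) * (1-α) + 1 := by
      rw [hn]
      exact Nat.ceil_lt_add_one hy.le
    have hM1 : ((M:ℝ)+1) ≠ 0 := by positivity
    have : ((M:ℝ) + 1) * (1 - α + 1 / ((M:ℝ)+1)) = ((M:ℝ)+1) * (1-α) + 1 := by
      field_simp
    rw [this]
    exact hceil.le
  have hrhs0 : (0:ℝ) ≤ 1 - α + 1 / ((M:ℝ)+1) := by
    have : (0:ℝ) < 1/((M:ℝ)+1) := by positivity
    linarith
  have hkey : (n : ℝ≥0∞) ≤ ((M:ℝ≥0∞) + 1) * ENNReal.ofReal (1 - α + 1 / ((M:ℝ)+1)) := by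
    have h1 : ((M:ℝ≥0∞) + 1) = ENNReal.ofReal ((M:ℝ)+1) := by
      rw [ENNReal.ofReal_add (by positivity) zero_le_one]
      simp [ENNReal.ofReal_natCast]
    rw [h1, ← ENNReal.ofReal_mul (by positivity)]
    calc (n : ℝ≥0∞) = ENNReal.ofReal (n : ℝ) := by simp [ENNReal.ofReal_natCast]
      _ ≤ _ := ENNReal.ofReal_le_ofReal hreal
  have hfinal : P (B (Fin.last M)) ≤ ENNReal.ofReal (1 - α + 1 / ((M:ℝ)+1)) := by
    have hne0 : ((M:ℝ≥0∞) + 1) ≠ 0 := by simp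
    have hnetop : ((M:ℝ≥0∞) + 1) ≠ ⊤ := by
      simp [ENNReal.add_ne_top]
    rw [← ENNReal.mul_le_mul_iff_right hne0 hnetop]
    rw [hsum2]
    exact hkey
  -- final assembly
  have hseteq : {ω | δ (Fin.last M) ω ≤ c ω} = T ⁻¹' (B (Fin.last M)) := by
    ext ω
    simp only [Set.mem_setOf_eq, Set.mem_preimage]
    rw [hc ω]
    exact hpoint (T ω)
  rw [hseteq, ← Measure.map_apply hTmeas (hBmeas (Fin.last M)), hmap]
  exact hfinal
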